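/- Let H : H₁ → H₀ be a subcrossed module of a crossed module G : G₁ → G₀ such that G = H·Z(G), i.e. G₁ = H₁·G₁^{G₀} and G₀ = H₀·(St_{G₀}(G₁) ∩ Z(G₀)). Then the crossed modules G and H are isoclinic. -/

import Mathlib

open scoped commutatorElement

/-- A crossed module `d : G₁ → G₀` with action `act : G₀ → Aut(G₁)`. -/
structure XMod (G₁ G₀ : Type*) [Group G₁] [Group G₀] where
  d : G₁ →* G₀
  act : G₀ →* MulAut G₁
  cm1 : ∀ (g₀ : G₀) (g₁ : G₁), d (act g₀ g₁) = g₀ * d g₁ * g₀⁻¹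
  cm2 : ∀ (g₁ g₁' : G₁), act (d g₁) g₁' = g₁ * g₁' * g₁⁻¹

/-- The commutator `⁅x, y⁆` lies in the commutator subgroup. -/
lemma mem_commutator_of {G : Type*} [Group G] (x y : G) : ⁅x, y⁆ ∈ commutator G := by
  rw [commutator_def]
  exact Subgroup.commutator_mem_commutator (Subgroup.mem_top x) (Subgroup.mem_top y)

namespace XMod

variable {G₁ G₀ : Type*} [Group G₁] [Group G₀] (X : XMod G₁ G₀)

lemma act_act (a b : G₀) (x : G₁) : X.act a (X.act b x) = X.act (a * b) x := by
  rw [map_mul]; rfl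

lemma act_one (x : G₁) : X.act 1 x = x := by rw [map_one]; rfl

/-- The fixed-point subgroup `G₁^{G₀}`. -/
def fix : Subgroup G₁ where
  carrier := {g₁ | ∀ g₀ : G₀, X.act g₀ g₁ = g₁}
  one_mem' := fun g₀ => map_one (X.act g₀)
  mul_mem' := fun {a b} ha hb g₀ => by rw [map_mul, ha g₀, hb g₀]
  inv_mem' := fun {a} ha g₀ => by rw [map_inv, ha g₀]

lemma mem_fix {g₁ : G₁} : g₁ ∈ X.fix ↔ ∀ g₀ : G₀, X.act g₀ g₁ = g₁ := Iff.rfl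

/-- The stabilizer `St_{G₀}(G₁)`. -/
def stab : Subgroup G₀ where
  carrier := {g₀ | ∀ g₁ : G₁, X.act g₀ g₁ = g₁}
  one_mem' := fun g₁ => X.act_one g₁
  mul_mem' := fun {a b} ha hb g₁ => by rw [← X.act_act, hb g₁, ha g₁]
  inv_mem' := fun {a} ha g₁ => by
    have h := X.act_act a⁻¹ a g₁
    rw [ha g₁] at h
    simpa [X.act_one] using h

lemma mem_stab {g₀ : G₀} : g₀ ∈ X.stab ↔ ∀ g₁ : G₁, X.act g₀ g₁ = g₁ := Iff.rfl

/-- `St_{G₀}(G₁) ∩ Z(G₀)`. -/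
def zstab : Subgroup G₀ := X.stab ⊓ Subgroup.center G₀

lemma fix_le_center : X.fix ≤ Subgroup.center G₁ := fun h hh =>
  Subgroup.mem_center_iff.mpr fun g => by
    have h1 := X.cm2 g h
    rw [hh (X.d g)] at h1
    exact mul_inv_eq_iff_eq_mul.mp h1.symm

instance fix_normal : (X.fix).Normal := ⟨fun n hn g => by
  rw [Subgroup.mem_center_iff.mp (X.fix_le_center hn) g]
  simpa using hn⟩

instance zstab_normal : (X.zstab).Normal := ⟨fun n hn g => by
  rw [Subgroup.mem_center_iff.mp (Subgroup.mem_inf.mp hn).2 g]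
  simpa using hn⟩

/-- The displacement subgroup `D_{G₀}(G₁)`. -/
def disp : Subgroup G₁ :=
  Subgroup.closure {x | ∃ (g₀ : G₀) (g₁ : G₁), x = X.act g₀ g₁ * g₁⁻¹}

lemma disp_gen_mem (g₀ : G₀) (g₁ : G₁) : X.act g₀ g₁ * g₁⁻¹ ∈ X.disp :=
  Subgroup.subset_closure ⟨g₀, g₁, rfl⟩

lemma d_fix_mem {g₁ : G₁} (h : g₁ ∈ X.fix) : X.d g₁ ∈ X.zstab := by
  refine Subgroup.mem_inf.mpr ⟨fun x => ?_, Subgroup.mem_center_iff.mpr fun g₀ => ?_⟩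
  · rw [X.cm2, ← Subgroup.mem_center_iff.mp (X.fix_le_center h) x]
    simp
  · have h1 := X.cm1 g₀ g₁
    rw [h g₀] at h1
    exact mul_inv_eq_iff_eq_mul.mp h1.symm

lemma d_disp_mem {x : G₁} (h : x ∈ X.disp) : X.d x ∈ commutator G₀ := by
  induction h using Subgroup.closure_induction with
  | mem y hy =>
      obtain ⟨g₀, g₁, rfl⟩ := hy
      have h2 : X.d (X.act g₀ g₁ * g₁⁻¹) = ⁅g₀, X.d g₁⁆ := by
        rw [map_mul, map_inv, X.cm1, commutatorElement_def]
      rw [h2]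
      exact mem_commutator_of g₀ (X.d g₁)
  | one => simpa using (commutator G₀).one_mem
  | mul a b _ _ ha hb => rw [map_mul]; exact mul_mem ha hb
  | inv a _ ha => rw [map_inv]; exact inv_mem ha

/-- The boundary map induced on central quotients. -/
def dbar : G₁ ⧸ X.fix →* G₀ ⧸ X.zstab :=
  QuotientGroup.map X.fix X.zstab X.d (fun _ h => X.d_fix_mem h)

/-- The boundary map restricted to the displacement/commutator subgroups. -/
def dres : X.disp →* commutator G₀ :=
  (X.d.domRestrict X.disp).codRestrict (commutator G₀) fun x => X.d_disp_mem x.2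

variable {H₁ H₀ : Type*} [Group H₁] [Group H₀]

/-- Isoclinism of crossed modules. -/
def Isoclinic (X : XMod G₁ G₀) (Y : XMod H₁ H₀) : Prop :=
  ∃ (η₁ : (G₁ ⧸ X.fix) ≃* (H₁ ⧸ Y.fix))
    (η₀ : (G₀ ⧸ X.zstab) ≃* (H₀ ⧸ Y.zstab))
    (ξ₁ : X.disp ≃* Y.disp)
    (ξ₀ : commutator G₀ ≃* commutator H₀),
    (∀ q : G₁ ⧸ X.fix, Y.dbar (η₁ q) = η₀ (X.dbar q)) ∧
    (∀ x : X.disp, Y.dres (ξ₁ x) = ξ₀ (X.dres x)) ∧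
    (∀ (g₁ : G₁) (g₀ : G₀) (h₁ : H₁) (h₀ : H₀),
       η₁ (QuotientGroup.mk g₁) = QuotientGroup.mk h₁ →
       η₀ (QuotientGroup.mk g₀) = QuotientGroup.mk h₀ →
       (ξ₁ ⟨X.act g₀ g₁ * g₁⁻¹, X.disp_gen_mem g₀ g₁⟩ : H₁) = Y.act h₀ h₁ * h₁⁻¹) ∧
    (∀ (g₀ g₀' : G₀) (h₀ h₀' : H₀),
       η₀ (QuotientGroup.mk g₀) = QuotientGroup.mk h₀ →
       η₀ (QuotientGroup.mk g₀') = QuotientGroup.mk h₀' →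
       (ξ₀ ⟨⁅g₀, g₀'⁆, mem_commutator_of g₀ g₀'⟩ : H₀) = ⁅h₀, h₀'⁆)

end XMod

/-- Isoclinism of groups. -/
def IsoclinicGrp (M N : Type*) [Group M] [Group N] : Prop :=
  ∃ (η : (M ⧸ Subgroup.center M) ≃* (N ⧸ Subgroup.center N))
    (ξ : commutator M ≃* commutator N),
    ∀ (x y : M) (u v : N),
      η (QuotientGroup.mk x) = QuotientGroup.mk u →
      η (QuotientGroup.mk y) = QuotientGroup.mk v →
      (ξ ⟨⁅x, y⁆, mem_commutator_of x y⟩ : N) = ⁅u, v⁆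
namespace XMod

variable {G₁ G₀ : Type*} [Group G₁] [Group G₀] (X : XMod G₁ G₀)

/-- Auxiliary automorphism of `H₁` induced by `h₀ ∈ H₀`. -/
def raux (H₁ : Subgroup G₁) (H₀ : Subgroup G₀)
    (hact : ∀ h₀ ∈ H₀, ∀ h₁ ∈ H₁, X.act h₀ h₁ ∈ H₁) (h₀ : H₀) : H₁ ≃* H₁ where
  toFun h₁ := ⟨X.act h₀ h₁, hact h₀ h₀.2 h₁ h₁.2⟩
  invFun h₁ := ⟨X.act ((h₀ : G₀))⁻¹ h₁, hact _ (inv_mem h₀.2) h₁ h₁.2⟩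
  left_inv h₁ := Subtype.ext (by
    show X.act ((h₀ : G₀))⁻¹ (X.act (h₀ : G₀) h₁) = (h₁ : G₁)
    rw [X.act_act, inv_mul_cancel, X.act_one])
  right_inv h₁ := Subtype.ext (by
    show X.act (h₀ : G₀) (X.act ((h₀ : G₀))⁻¹ h₁) = (h₁ : G₁)
    rw [X.act_act, mul_inv_cancel, X.act_one])
  map_mul' a b := Subtype.ext (by
    show X.act (h₀ : G₀) ((a : G₁) * b) = X.act (h₀ : G₀) a * X.act (h₀ : G₀) b
    exact map_mul _ _ _)

/-- The subcrossed module of `X` determined by subgroups `H₁ ≤ G₁`, `H₀ ≤ G₀`. -/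
def restrict (H₁ : Subgroup G₁) (H₀ : Subgroup G₀)
    (hd : ∀ h ∈ H₁, X.d h ∈ H₀)
    (hact : ∀ h₀ ∈ H₀, ∀ h₁ ∈ H₁, X.act h₀ h₁ ∈ H₁) : XMod H₁ H₀ where
  d := {
    toFun := fun h => ⟨X.d h, hd h h.2⟩
    map_one' := Subtype.ext (by simp)
    map_mul' := fun a b => Subtype.ext (by simp) }
  act := {
    toFun := X.raux H₁ H₀ hact
    map_one' := MulEquiv.ext fun h₁ => Subtype.ext (by
      show X.act ((1 : H₀) : G₀) h₁ = (h₁ : G₁)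
      simp [X.act_one])
    map_mul' := fun a b => MulEquiv.ext fun h₁ => Subtype.ext (by
      show X.act (((a * b : H₀)) : G₀) h₁ = X.act (a : G₀) (X.act (b : G₀) h₁)
      rw [X.act_act]
      norm_cast) }
  cm1 := fun g₀ g₁ => Subtype.ext (by
    show X.d (X.act (g₀ : G₀) g₁) = (g₀ : G₀) * X.d g₁ * (g₀ : G₀)⁻¹
    exact X.cm1 _ _)
  cm2 := fun g₁ g₁' => Subtype.ext (by
    show X.act (X.d (g₁ : G₁)) g₁' = (g₁ : G₁) * g₁' * (g₁ : G₁)⁻¹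
    exact X.cm2 _ _)

end XMod

/-!
Since `G₁ = H₁ · G₁^{G₀}` and `G₀ = H₀ · (St_{G₀}(G₁) ∩ Z(G₀))`, the fixed points and the central
stabilizer of `H` are exactly the traces on `H₁`, `H₀` of those of `G`, so by the second isomorphism
theorem the inclusions induce `H₁/H₁^{H₀} ≅ G₁/G₁^{G₀}` and the analogous map on level `0`.
Multiplying `g₁` by a fixed point and `g₀` by a central stabilizing element changes neither the
displacement `ᵍ⁰g₁ · g₁⁻¹` nor commutators, so the inclusions also map `D_{H₀}(H₁)` onto
`D_{G₀}(G₁)` and `[H₀, H₀]` onto `[G₀, G₀]`. All four isomorphisms are induced by inclusions, so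
every compatibility holds on the nose.
-/

section GroupLemmas

variable {G : Type*} [Group G]

theorem commutatorElement_mul_mul_of_mem_center (x y : G) {w w' : G}
    (hw : w ∈ Subgroup.center G) (hw' : w' ∈ Subgroup.center G) :
    ⁅x * w, y * w'⁆ = ⁅x, y⁆ := by
  have hwy : w * y = y * w := Subgroup.mem_center_iff.mp hw y |>.symm
  have hw'x : w' * x⁻¹ = x⁻¹ * w' := Subgroup.mem_center_iff.mp hw' x⁻¹ |>.symm
  have hw'w : w' * w⁻¹ = w⁻¹ * w' := Subgroup.mem_center_iff.mp (inv_mem hw) w'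
  calc ⁅x * w, y * w'⁆ = x * (w * y) * (w' * w⁻¹) * x⁻¹ * w'⁻¹ * y⁻¹ := by
        simp only [commutatorElement_def]; group
    _ = x * y * (w' * x⁻¹) * w'⁻¹ * y⁻¹ := by rw [hwy, hw'w]; group
    _ = ⁅x, y⁆ := by rw [hw'x, commutatorElement_def]; group

theorem commutatorElement_eq_of_mk_eq {N : Subgroup G} (hN : N ≤ Subgroup.center G)
    {x y x' y' : G} (hx : (x : G ⧸ N) = x') (hy : (y : G ⧸ N) = y') :
    ⁅x, y⁆ = ⁅x', y'⁆ := by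
  rw [← mul_inv_cancel_left x x', ← mul_inv_cancel_left y y',
    commutatorElement_mul_mul_of_mem_center _ _ (hN (QuotientGroup.eq.mp hx))
      (hN (QuotientGroup.eq.mp hy))]

theorem Subgroup.map_subtype_commutator_of_mul_center {H N : Subgroup G}
    (hN : N ≤ Subgroup.center G) (hHN : ∀ g : G, ∃ x ∈ H, ∃ z ∈ N, g = x * z) :
    (_root_.commutator H).map H.subtype = _root_.commutator G := by
  refine le_antisymm ?_ ?_
  · rw [_root_.commutator_def, Subgroup.map_commutator, _root_.commutator_def]
    exact Subgroup.commutator_mono le_top le_top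
  · rw [_root_.commutator_def G]
    refine Subgroup.commutator_le.mpr fun g _ g' _ => ?_
    obtain ⟨x, hx, z, hz, rfl⟩ := hHN g
    obtain ⟨x', hx', z', hz', rfl⟩ := hHN g'
    rw [commutatorElement_mul_mul_of_mem_center x x' (hN hz) (hN hz')]
    exact ⟨⁅(⟨x, hx⟩ : H), ⟨x', hx'⟩⁆, mem_commutator_of _ _, rfl⟩

noncomputable def Subgroup.equivOfMapSubtypeEq {H : Subgroup G} {K : Subgroup H}
    {L : Subgroup G} (h : K.map H.subtype = L) : L ≃* K :=
  ((K.equivMapOfInjective H.subtype H.subtype_injective).trans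
    (MulEquiv.subgroupCongr h)).symm

@[simp]
theorem Subgroup.coe_coe_equivOfMapSubtypeEq {H : Subgroup G} {K : Subgroup H}
    {L : Subgroup G} (h : K.map H.subtype = L) (x : L) :
    ((Subgroup.equivOfMapSubtypeEq h x : H) : G) = x := by
  obtain ⟨y, rfl⟩ := (Subgroup.equivOfMapSubtypeEq h).symm.surjective x
  rw [MulEquiv.apply_symm_apply]
  rfl

namespace QuotientGroup

variable {H N : Subgroup G} [N.Normal]

theorem surjective_mk'_comp_subtype (hHN : ∀ g : G, ∃ x ∈ H, ∃ z ∈ N, g = x * z) :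
    Function.Surjective ((mk' N).comp H.subtype) := by
  intro q
  induction q using QuotientGroup.induction_on with
  | H g =>
    obtain ⟨x, hx, z, hz, rfl⟩ := hHN g
    exact ⟨⟨x, hx⟩, QuotientGroup.eq.mpr (by simpa using hz)⟩

/-- The second isomorphism theorem for `G = H N`, with the kernel `M` given up to equality. -/
noncomputable def equivOfMulSupplement (M : Subgroup H) [M.Normal]
    (hM : M = N.subgroupOf H) (hHN : ∀ g : G, ∃ x ∈ H, ∃ z ∈ N, g = x * z) :
    H ⧸ M ≃* G ⧸ N :=
  (quotientMulEquivOfEq (hM.trans (by rw [← MonoidHom.comap_ker, ker_mk']; rfl))).trans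
    (quotientKerEquivOfSurjective _ (surjective_mk'_comp_subtype hHN))

end QuotientGroup

end GroupLemmas

namespace XMod

variable {G₁ G₀ : Type*} [Group G₁] [Group G₀] (X : XMod G₁ G₀)

theorem zstab_le_center : X.zstab ≤ Subgroup.center G₀ := inf_le_right

theorem act_of_mem_zstab {w : G₀} (hw : w ∈ X.zstab) (g₁ : G₁) : X.act w g₁ = g₁ :=
  (Subgroup.mem_inf.mp hw).1 g₁

theorem act_mul_mul_mul_inv (g₀ : G₀) (g₁ : G₁) {w : G₀} {z : G₁} (hw : w ∈ X.zstab)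
    (hz : z ∈ X.fix) :
    X.act (g₀ * w) (g₁ * z) * (g₁ * z)⁻¹ = X.act g₀ g₁ * g₁⁻¹ := by
  rw [← X.act_act, X.act_of_mem_zstab hw, map_mul, hz g₀, mul_inv_rev]
  group

theorem act_mul_inv_eq_of_mk_eq {g₀ h₀ : G₀} {g₁ h₁ : G₁}
    (h0 : (g₀ : G₀ ⧸ X.zstab) = h₀) (h1 : (g₁ : G₁ ⧸ X.fix) = h₁) :
    X.act g₀ g₁ * g₁⁻¹ = X.act h₀ h₁ * h₁⁻¹ := by
  rw [← mul_inv_cancel_left g₀ h₀, ← mul_inv_cancel_left g₁ h₁,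
    X.act_mul_mul_mul_inv _ _ (QuotientGroup.eq.mp h0) (QuotientGroup.eq.mp h1)]

section Restrict

variable {H₁ : Subgroup G₁} {H₀ : Subgroup G₀} (hd : ∀ h ∈ H₁, X.d h ∈ H₀)
  (hact : ∀ h₀ ∈ H₀, ∀ h₁ ∈ H₁, X.act h₀ h₁ ∈ H₁)

@[simp]
theorem coe_restrict_act (h₀ : H₀) (h₁ : H₁) :
    ((X.restrict H₁ H₀ hd hact).act h₀ h₁ : G₁) = X.act h₀ h₁ := rfl

theorem restrict_fix_eq (hG₀ : ∀ g₀ : G₀, ∃ x ∈ H₀, ∃ z ∈ X.zstab, g₀ = x * z) :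
    (X.restrict H₁ H₀ hd hact).fix = X.fix.subgroupOf H₁ := by
  ext h₁
  rw [Subgroup.mem_subgroupOf]
  constructor
  · intro hfix g₀
    obtain ⟨x, hx, w, hw, rfl⟩ := hG₀ g₀
    rw [← X.act_act, X.act_of_mem_zstab hw]
    simpa using congrArg Subtype.val (hfix ⟨x, hx⟩)
  · intro hfix h₀
    exact Subtype.ext (hfix h₀)

theorem restrict_zstab_eq (hG₁ : ∀ g₁ : G₁, ∃ x ∈ H₁, ∃ z ∈ X.fix, g₁ = x * z)
    (hG₀ : ∀ g₀ : G₀, ∃ x ∈ H₀, ∃ z ∈ X.zstab, g₀ = x * z) :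
    (X.restrict H₁ H₀ hd hact).zstab = X.zstab.subgroupOf H₀ := by
  ext h₀
  rw [Subgroup.mem_subgroupOf]
  constructor
  · rintro ⟨hstab, hcenter⟩
    refine ⟨fun g₁ => ?_, Subgroup.mem_center_iff.mpr fun g => ?_⟩
    · obtain ⟨y, hy, z, hz, rfl⟩ := hG₁ g₁
      rw [map_mul, hz]
      simpa using congrArg Subtype.val (hstab ⟨y, hy⟩)
    · obtain ⟨x, hx, w, hw, rfl⟩ := hG₀ g
      have hxh : x * h₀ = h₀ * x :=
        congrArg Subtype.val (Subgroup.mem_center_iff.mp hcenter ⟨x, hx⟩)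
      rw [mul_assoc, ← Subgroup.mem_center_iff.mp (X.zstab_le_center hw), ← mul_assoc, hxh,
        mul_assoc]
  · rintro ⟨hstab, hcenter⟩
    exact ⟨fun h₁ => Subtype.ext (hstab h₁),
      Subgroup.mem_center_iff.mpr fun g => Subtype.ext (Subgroup.mem_center_iff.mp hcenter g)⟩

theorem map_subtype_restrict_disp (hG₁ : ∀ g₁ : G₁, ∃ x ∈ H₁, ∃ z ∈ X.fix, g₁ = x * z)
    (hG₀ : ∀ g₀ : G₀, ∃ x ∈ H₀, ∃ z ∈ X.zstab, g₀ = x * z) :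
    (X.restrict H₁ H₀ hd hact).disp.map H₁.subtype = X.disp := by
  refine le_antisymm ?_ ?_
  · rw [Subgroup.map_le_iff_le_comap]
    refine (Subgroup.closure_le _).mpr ?_
    rintro _ ⟨h₀, h₁, rfl⟩
    exact X.disp_gen_mem h₀ h₁
  · refine (Subgroup.closure_le _).mpr ?_
    rintro _ ⟨g₀, g₁, rfl⟩
    obtain ⟨x, hx, w, hw, rfl⟩ := hG₀ g₀
    obtain ⟨y, hy, z, hz, rfl⟩ := hG₁ g₁
    rw [SetLike.mem_coe, X.act_mul_mul_mul_inv _ _ hw hz]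
    exact ⟨_, (X.restrict H₁ H₀ hd hact).disp_gen_mem ⟨x, hx⟩ ⟨y, hy⟩, by simp⟩

end Restrict

end XMod

/-- if `H : H₁ → H₀` is a subcrossed module of `G : G₁ → G₀` with
`G = H · Z(G)`, i.e. `G₁ = H₁ · G₁^{G₀}` and `G₀ = H₀ · (St_{G₀}(G₁) ∩ Z(G₀))`,
then `G` and `H` are isoclinic crossed modules. -/
theorem isoclinic_restrict {G₁ G₀ : Type*} [Group G₁] [Group G₀] (X : XMod G₁ G₀)
    (H₁ : Subgroup G₁) (H₀ : Subgroup G₀)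
    (hd : ∀ h ∈ H₁, X.d h ∈ H₀)
    (hact : ∀ h₀ ∈ H₀, ∀ h₁ ∈ H₁, X.act h₀ h₁ ∈ H₁)
    (hG₁ : ∀ g₁ : G₁, ∃ x ∈ H₁, ∃ z ∈ X.fix, g₁ = x * z)
    (hG₀ : ∀ g₀ : G₀, ∃ x ∈ H₀, ∃ z ∈ X.zstab, g₀ = x * z) :
    X.Isoclinic (X.restrict H₁ H₀ hd hact) := by
  set Y := X.restrict H₁ H₀ hd hact
  let e₁ : H₁ ⧸ Y.fix ≃* G₁ ⧸ X.fix :=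
    QuotientGroup.equivOfMulSupplement _ (X.restrict_fix_eq hd hact hG₀) hG₁
  let e₀ : H₀ ⧸ Y.zstab ≃* G₀ ⧸ X.zstab :=
    QuotientGroup.equivOfMulSupplement _ (X.restrict_zstab_eq hd hact hG₁ hG₀) hG₀
  have mk_eq₁ {g₁ : G₁} {h₁ : H₁} (h : e₁.symm g₁ = h₁) : (g₁ : G₁ ⧸ X.fix) = (h₁ : G₁) :=
    e₁.symm_apply_eq.mp h
  have mk_eq₀ {g₀ : G₀} {h₀ : H₀} (h : e₀.symm g₀ = h₀) : (g₀ : G₀ ⧸ X.zstab) = (h₀ : G₀) :=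
    e₀.symm_apply_eq.mp h
  let ξ₁ : X.disp ≃* Y.disp :=
    Subgroup.equivOfMapSubtypeEq (X.map_subtype_restrict_disp hd hact hG₁ hG₀)
  let ξ₀ : commutator G₀ ≃* commutator H₀ :=
    Subgroup.equivOfMapSubtypeEq
      (Subgroup.map_subtype_commutator_of_mul_center X.zstab_le_center hG₀)
  refine ⟨e₁.symm, e₀.symm, ξ₁, ξ₀, fun q => ?_, fun x => ?_,
    fun g₁ g₀ h₁ h₀ he₁ he₀ => ?_, fun g₀ g₀' h₀ h₀' he₀ he₀' => ?_⟩
  · obtain ⟨p, rfl⟩ := e₁.surjective q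
    induction p using QuotientGroup.induction_on
    rw [e₁.symm_apply_apply, e₀.eq_symm_apply]
    rfl
  · ext
    show X.d ((ξ₁ x : H₁) : G₁) = ((ξ₀ (X.dres x) : H₀) : G₀)
    rw [Subgroup.coe_coe_equivOfMapSubtypeEq, Subgroup.coe_coe_equivOfMapSubtypeEq]
    rfl
  · ext
    rw [Subgroup.coe_coe_equivOfMapSubtypeEq]
    exact X.act_mul_inv_eq_of_mk_eq (mk_eq₀ he₀) (mk_eq₁ he₁)
  · ext
    rw [Subgroup.coe_coe_equivOfMapSubtypeEq]
    exact commutatorElement_eq_of_mk_eq X.zstab_le_center (mk_eq₀ he₀) (mk_eq₀ he₀')
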